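/- arXiv:2508.20842 — 2 statements merged into one kernel-verified Lean document; each statement's English description precedes it below -/
import Mathlib

section
/- Let R be a generalized Rickart *-ring and let B be a *-subring of R (closed under addition, negation, multiplication and the involution) such that (1) B contains the unity of R, and (2) for every x ∈ B, every generalized right projection of x in R lies in B. Then B is a generalized Rickart *-ring: for every x ∈ B there exist a positive integer n and a projection e ∈ B with {y ∈ B : xⁿy = 0} = {eb : b ∈ B}. -/
/-- An element of a `*`-ring is a *projection* if it is self-adjoint and idempotent. -/
def IsProjection {R : Type*} [Ring R] [StarRing R] (e : R) : Prop :=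
  star e = e ∧ e * e = e

/-- `e` is a generalized right projection of `x`: `e` is a projection and there is a
positive integer `n` with `xⁿe = xⁿ` and `xⁿy = 0 → ey = 0` for all `y`. -/
def IsGRP {R : Type*} [Ring R] [StarRing R] (x e : R) : Prop :=
  IsProjection e ∧ ∃ n : ℕ, 0 < n ∧ x ^ n * e = x ^ n ∧
    ∀ y : R, x ^ n * y = 0 → e * y = 0

/-- `f` is a generalized left projection of `x`: `f` is a projection and there is a
positive integer `n` with `fxⁿ = xⁿ` and `yxⁿ = 0 → yf = 0` for all `y`. -/
def IsGLP {R : Type*} [Ring R] [StarRing R] (x f : R) : Prop :=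
  IsProjection f ∧ ∃ n : ℕ, 0 < n ∧ f * x ^ n = x ^ n ∧
    ∀ y : R, y * x ^ n = 0 → y * f = 0

/-- A unital `*`-ring is a generalized Rickart `*`-ring if for every `x` there are a
positive integer `n` and a projection `g` with `r(xⁿ) = gR`. -/
def IsGenRickart (R : Type*) [Ring R] [StarRing R] : Prop :=
  ∀ x : R, ∃ n : ℕ, 0 < n ∧ ∃ g : R, IsProjection g ∧
    ∀ y : R, (x ^ n * y = 0 ↔ ∃ r : R, y = g * r)

/-- A `*`-subring `B` of a generalized Rickart `*`-ring that contains
the unity and contains the generalized right projections of its elements is itself a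
generalized Rickart `*`-ring. -/
theorem subring_genRickart {R : Type*} [Ring R] [StarRing R]
    (h : IsGenRickart R) (B : Set R)
    (hadd : ∀ a ∈ B, ∀ b ∈ B, a + b ∈ B)
    (hneg : ∀ a ∈ B, -a ∈ B)
    (hmul : ∀ a ∈ B, ∀ b ∈ B, a * b ∈ B)
    (hstar : ∀ a ∈ B, star a ∈ B)
    (hone : (1 : R) ∈ B)
    (hGRP : ∀ x ∈ B, ∀ e : R, IsGRP x e → e ∈ B) :
    ∀ x ∈ B, ∃ n : ℕ, 0 < n ∧ ∃ e ∈ B, IsProjection e ∧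
      ∀ y ∈ B, (x ^ n * y = 0 ↔ ∃ b ∈ B, y = e * b) := by
  intro x hx
  obtain ⟨n, hn, g, ⟨hgs, hgi⟩, hg⟩ := h x
  have hxg : x ^ n * g = 0 := (hg g).mpr ⟨1, by rw [mul_one]⟩
  -- 1 - g is a GRP of x, hence in B, hence g ∈ B
  have hGRP1 : IsGRP x (1 - g) := by
    refine ⟨⟨by simp [star_sub, hgs], by rw [sub_mul, mul_sub, mul_sub, one_mul, mul_one, hgi]; noncomm_ring⟩, n, hn, ?_, ?_⟩
    · rw [mul_sub, mul_one, hxg, sub_zero]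
    · intro y hy
      obtain ⟨r, hr⟩ := (hg y).mp hy
      rw [hr, sub_mul, one_mul, ← mul_assoc, hgi, sub_self]
  have h1g : (1 - g) ∈ B := hGRP x hx _ hGRP1
  have hgB : g ∈ B := by
    have := hadd 1 hone _ (hneg _ h1g)
    simpa using this
  refine ⟨n, hn, g, hgB, ⟨hgs, hgi⟩, fun y hy => ⟨fun hzy => ?_, fun ⟨b, hb, hby⟩ => ?_⟩⟩
  · obtain ⟨r, hr⟩ := (hg y).mp hzy
    exact ⟨y, hy, by rw [hr, ← mul_assoc, hgi]⟩
  · rw [hby, ← mul_assoc, hxg, zero_mul]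
end

section
/- Let R be a generalized Rickart *-ring and let B be a *-subring of R with B = B″, where for a subset S of R, S′ = {x ∈ R : xs = sx for all s ∈ S} and B″ = (B′)′. Then (1) for every x ∈ B, every generalized right projection of x in R lies in B, and (2) B is a generalized Rickart *-ring: for every x ∈ B there exist a positive integer n and a projection e ∈ B with {y ∈ B : xⁿy = 0} = {eb : b ∈ B}. -/
/-- The commutant of a subset `S` of a ring. -/
def commutant {R : Type*} [Ring R] (S : Set R) : Set R :=
  {x : R | ∀ s ∈ S, x * s = s * x}

/-- If `B` is a `*`-subring of a generalized Rickart `*`-ring with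
`B = B″`, then (1) generalized right projections of elements of `B` lie in `B`, and
(2) `B` is a generalized Rickart `*`-ring. -/
theorem bicommutant_genRickart {R : Type*} [Ring R] [StarRing R]
    (h : IsGenRickart R) (B : Set R)
    (hadd : ∀ a ∈ B, ∀ b ∈ B, a + b ∈ B)
    (hneg : ∀ a ∈ B, -a ∈ B)
    (hmul : ∀ a ∈ B, ∀ b ∈ B, a * b ∈ B)
    (hstar : ∀ a ∈ B, star a ∈ B)
    (hB : B = commutant (commutant B)) :
    (∀ x ∈ B, ∀ e : R, IsGRP x e → e ∈ B) ∧
    (∀ x ∈ B, ∃ n : ℕ, 0 < n ∧ ∃ e ∈ B, IsProjection e ∧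
      ∀ y ∈ B, (x ^ n * y = 0 ↔ ∃ b ∈ B, y = e * b)) := by

  have h1B : (1 : R) ∈ B := by
    rw [hB]; intro s _; rw [one_mul, mul_one]
  have hstar' : ∀ y ∈ commutant B, star y ∈ commutant B := by
    intro y hy s hs
    have h1 := hy (star s) (hstar s hs)
    calc star y * s = star (star s * y) := by simp
      _ = star (y * star s) := by rw [h1]
      _ = s * star y := by simp
  have part1 : ∀ x ∈ B, ∀ e : R, IsGRP x e → e ∈ B := by
    intro x hx e he
    obtain ⟨⟨hes, hee⟩, n, hn, hxe, hann⟩ := he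
    rw [hB]
    intro y hy
    have key : ∀ z ∈ commutant B, e * z * (1 - e) = 0 := by
      intro z hz
      have hc : x ^ n * z = z * x ^ n := ((Commute.pow_right (hz x hx) n)).symm
      have h0 : x ^ n * (z * (1 - e)) = 0 := by
        rw [← mul_assoc, hc, mul_assoc, mul_sub, mul_one, hxe, sub_self, mul_zero]
      have h2 := hann _ h0
      rwa [← mul_assoc] at h2
    have h1 := key y hy
    have h2 := key (star y) (hstar' y hy)
    have h2' : (1 - e) * (y * e) = 0 := by
      have h3 := congrArg star h2
      rw [star_mul, star_mul, star_sub, star_one, hes, star_star, star_zero] at h3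
      exact h3
    have a1 : e * y = e * y * e := by
      rwa [mul_sub, mul_one, sub_eq_zero] at h1
    have a2 : y * e = e * (y * e) := by
      rwa [sub_mul, one_mul, sub_eq_zero] at h2'
    rw [a1, mul_assoc, ← a2]
  refine ⟨part1, ?_⟩
  intro x hx
  obtain ⟨n, hn, g, ⟨hgs, hgg⟩, hr⟩ := h x
  have hxg : x ^ n * g = 0 := (hr g).mpr ⟨g, hgg.symm⟩
  have hGRP : IsGRP x (1 - g) := by
    refine ⟨⟨by rw [star_sub, star_one, hgs], by
      rw [sub_mul, one_mul, mul_sub, mul_one, hgg, sub_self, sub_zero]⟩,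
      n, hn, by rw [mul_sub, mul_one, hxg, sub_zero], ?_⟩
    intro y hy0
    obtain ⟨r, hyr⟩ := (hr y).mp hy0
    rw [hyr, sub_mul, one_mul, ← mul_assoc, hgg, sub_self]
  have heB : (1 : R) - g ∈ B := part1 x hx _ hGRP
  have hgB : g ∈ B := by
    have h4 := hadd 1 h1B _ (hneg _ heB)
    simpa using h4
  refine ⟨n, hn, g, hgB, ⟨hgs, hgg⟩, ?_⟩
  intro y hyB
  constructor
  · intro hy0
    obtain ⟨r, hyr⟩ := (hr y).mp hy0
    have h5 : g * y = y := by rw [hyr, ← mul_assoc, hgg]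
    exact ⟨y, hyB, h5.symm⟩
  · rintro ⟨b, _, rfl⟩
    rw [← mul_assoc, hxg, zero_mul]
end
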